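/- arXiv:1509.08617 — 2 statements merged into one kernel-verified Lean document; each statement's English description precedes it below -/
import Mathlib

section
/- Let V be a Banach space over a p-adic field L, and M ⊆ V a lattice (an O_L-submodule with ∪_{a∈L^×} aM = V and ∩_{a∈L^×} aM = {0}) that is open and bounded. Then for a totally disconnected locally compact group 𝒢, the space Meas(𝒢, V) of V-valued measures (distributions continuous for the supremum norm) equals the image of the canonical inclusion Dist(𝒢, M) ⊗_{O_L} L → Dist(𝒢, V). -/
/-!
Every `f ∈ C_c(𝒢, ℤ)₀` is a finite sum of compactly supported functions with values in
`{-1, 0, 1}`: the `k`-th one is `sign f` on `{|f| > k}`. A measure is bounded on these, so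
their images lie in a ball, which the open lattice absorbs into some `a • M`; since `a • M`
is closed under addition, it then contains every value of the measure. Conversely, values in
the bounded set `a • M` are bounded by some `R`, and `R ≤ R ‖f‖_∞` because a nonzero
integer-valued function has sup norm at least `1`.
-/

open scoped Pointwise

/-- The additive group of compactly supported continuous `ℤ`-valued functions
(`ℤ` discrete) on a topological space, i.e. `C_c(𝒢, ℤ)₀`. -/
def CcZ (𝒢 : Type*) [TopologicalSpace 𝒢] : AddSubgroup C(𝒢, ℤ) where
  carrier := {f | HasCompactSupport (f : 𝒢 → ℤ)}
  add_mem' := by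
    intro f g hf hg
    simpa [Set.mem_setOf_eq] using hf.add hg
  zero_mem' := by
    simp only [Set.mem_setOf_eq, ContinuousMap.coe_zero]
    rw [HasCompactSupport, tsupport, Function.support_zero, closure_empty]
    exact isCompact_empty
  neg_mem' := by
    intro f hf
    simp only [Set.mem_setOf_eq, ContinuousMap.coe_neg]
    rw [HasCompactSupport, tsupport, Function.support_neg]
    exact hf

open Finset Metric Topology

def intLayer (k : ℕ) (m : ℤ) : ℤ := if k < m.natAbs then m.sign else 0

lemma intLayer_zero_right (k : ℕ) : intLayer k 0 = 0 := by simp [intLayer]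

lemma abs_intLayer_le_one (k : ℕ) (m : ℤ) : |intLayer k m| ≤ 1 := by
  unfold intLayer
  split_ifs
  · rcases Int.sign_trichotomy m with h | h | h <;> simp [h]
  · simp

lemma sum_range_intLayer {m : ℤ} {N : ℕ} (h : m.natAbs ≤ N) :
    ∑ k ∈ range N, intLayer k m = m := by
  have hfilter : {k ∈ range N | k < m.natAbs} = range m.natAbs := by
    ext k
    simp only [mem_filter, mem_range]
    omega
  simp only [intLayer]
  rw [sum_ite, sum_const_zero, add_zero, sum_const, hfilter, card_range, nsmul_eq_mul,
    mul_comm, Int.sign_mul_natAbs]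

namespace CcZ

variable {X : Type*} [TopologicalSpace X]

lemma hasCompactSupport (f : CcZ X) : HasCompactSupport ((f : C(X, ℤ)) : X → ℤ) := f.2

def compLeft (g : ℤ → ℤ) (hg : g 0 = 0) (f : CcZ X) : CcZ X :=
  ⟨⟨g ∘ (f : C(X, ℤ)), continuous_of_discreteTopology.comp (f : C(X, ℤ)).continuous⟩,
    (hasCompactSupport f).comp_left hg⟩

@[simp]
lemma compLeft_apply (g : ℤ → ℤ) (hg : g 0 = 0) (f : CcZ X) (x : X) :
    (compLeft g hg f : C(X, ℤ)) x = g ((f : C(X, ℤ)) x) :=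
  rfl

lemma exists_norm_le (f : CcZ X) : ∃ C : ℝ, ∀ x, ‖(f : C(X, ℤ)) x‖ ≤ C :=
  (f : C(X, ℤ)).continuous.bounded_above_of_compact_support (hasCompactSupport f)

lemma exists_natAbs_le (f : CcZ X) : ∃ N : ℕ, ∀ x, ((f : C(X, ℤ)) x).natAbs ≤ N := by
  obtain ⟨C, hC⟩ := exists_norm_le f
  refine ⟨⌈C⌉₊, fun x => ?_⟩
  have h := (hC x).trans (Nat.le_ceil C)
  rw [Int.norm_eq_abs, ← Int.cast_abs, ← Int.natCast_natAbs] at h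
  exact_mod_cast h

lemma eq_sum_compLeft_intLayer (f : CcZ X) {N : ℕ}
    (hN : ∀ x, ((f : C(X, ℤ)) x).natAbs ≤ N) :
    f = ∑ k ∈ range N, compLeft (intLayer k) (intLayer_zero_right k) f := by
  ext x
  rw [AddSubgroup.val_finsetSum, ContinuousMap.coe_sum, Finset.sum_apply]
  simp only [compLeft_apply]
  exact (sum_range_intLayer (hN x)).symm

lemma map_mem_of_forall_abs_le_one {A : Type*} [AddCommMonoid A] (μ : CcZ X →+ A)
    (S : AddSubmonoid A) (h : ∀ g : CcZ X, (∀ x, |(g : C(X, ℤ)) x| ≤ 1) → μ g ∈ S)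
    (f : CcZ X) : μ f ∈ S := by
  obtain ⟨N, hN⟩ := exists_natAbs_le f
  rw [eq_sum_compLeft_intLayer f hN, map_sum]
  exact sum_mem fun k _ => h _ fun x => abs_intLayer_le_one k ((f : C(X, ℤ)) x)

lemma iSup_norm_le_one {g : CcZ X} (hg : ∀ x, |(g : C(X, ℤ)) x| ≤ 1) :
    ⨆ x, ‖(g : C(X, ℤ)) x‖ ≤ 1 :=
  Real.iSup_le (fun x => by rw [Int.norm_eq_abs]; exact_mod_cast hg x) zero_le_one

lemma one_le_iSup_norm {f : CcZ X} (hf : f ≠ 0) : 1 ≤ ⨆ x, ‖(f : C(X, ℤ)) x‖ := by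
  obtain ⟨x, hx⟩ : ∃ x, (f : C(X, ℤ)) x ≠ 0 := by
    by_contra! h
    exact hf (Subtype.ext (ContinuousMap.ext h))
  obtain ⟨C, hC⟩ := exists_norm_le f
  refine le_ciSup_of_le ⟨C, by rintro _ ⟨y, rfl⟩; exact hC y⟩ x ?_
  rw [Int.norm_eq_abs]
  exact_mod_cast Int.one_le_abs hx

lemma norm_map_le_mul_iSup_of_forall_norm_le {V : Type*} [SeminormedAddCommGroup V]
    (μ : CcZ X →+ V) {R : ℝ} (hR : ∀ f, ‖μ f‖ ≤ R) (f : CcZ X) :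
    ‖μ f‖ ≤ R * ⨆ x, ‖(f : C(X, ℤ)) x‖ := by
  rcases eq_or_ne f 0 with rfl | hf
  · simp
  · exact (hR f).trans (le_mul_of_one_le_right ((norm_nonneg _).trans (hR f))
      (one_le_iSup_norm hf))

end CcZ

section Absorb

variable {L V : Type*} [NontriviallyNormedField L] [SeminormedAddCommGroup V] [NormedSpace L V]

lemma exists_closedBall_subset_smul_of_mem_nhds {M : Set V} (hM : M ∈ 𝓝 (0 : V)) (R : ℝ) :
    ∃ a : Lˣ, closedBall (0 : V) R ⊆ (a : L) • M := by
  obtain ⟨r, hr, hsub⟩ := (NormedSpace.isVonNBounded_closedBall L V R hM).exists_pos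
  obtain ⟨c, hc⟩ := NormedField.exists_lt_norm L r
  exact ⟨Units.mk0 c (norm_pos_iff.mp (hr.trans hc)), hsub c hc.le⟩

lemma CcZ.exists_forall_map_mem_smul_of_le_mul_iSup {X : Type*} [TopologicalSpace X]
    (M : AddSubmonoid V) (hM : (M : Set V) ∈ 𝓝 (0 : V)) (μ : CcZ X →+ V) {C : ℝ}
    (hC : ∀ f : CcZ X, ‖μ f‖ ≤ C * ⨆ x, ‖(f : C(X, ℤ)) x‖) :
    ∃ a : Lˣ, ∀ f : CcZ X, μ f ∈ (a : L) • (M : Set V) := by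
  obtain ⟨a, ha⟩ := exists_closedBall_subset_smul_of_mem_nhds (L := L) hM |C|
  refine ⟨a, fun f => ?_⟩
  rw [← AddSubmonoid.coe_pointwise_smul, SetLike.mem_coe]
  refine CcZ.map_mem_of_forall_abs_le_one μ _ (fun g hg => ha ?_) f
  have hsup_nonneg : 0 ≤ ⨆ x, ‖(g : C(X, ℤ)) x‖ := Real.iSup_nonneg fun _ => norm_nonneg _
  rw [mem_closedBall_zero_iff]
  calc ‖μ g‖ ≤ C * ⨆ x, ‖(g : C(X, ℤ)) x‖ := hC g
    _ ≤ |C| * ⨆ x, ‖(g : C(X, ℤ)) x‖ := mul_le_mul_of_nonneg_right (le_abs_self C) hsup_nonneg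
    _ ≤ |C| := mul_le_of_le_one_right (abs_nonneg C) (CcZ.iSup_norm_le_one hg)

end Absorb

theorem stmt3_general
    (L : Type*) [NontriviallyNormedField L]
    (𝒢 : Type*) [TopologicalSpace 𝒢]
    (V : Type*) [NormedAddCommGroup V] [NormedSpace L V]
    (M : Set V)
    (hMadd : ∀ v ∈ M, ∀ w ∈ M, v + w ∈ M)
    (hMopen : M ∈ nhds (0 : V))
    (hMbdd : Bornology.IsBounded M)
    (μ : CcZ 𝒢 →+ V) :
    (∃ C : ℝ, ∀ f : CcZ 𝒢, ‖μ f‖ ≤ C * ⨆ x : 𝒢, ‖((f : C(𝒢, ℤ)) x : ℤ)‖)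
      ↔ ∃ a : Lˣ, ∀ f : CcZ 𝒢, μ f ∈ (a : L) • M := by
  constructor
  · rintro ⟨C, hC⟩
    let M' : AddSubmonoid V :=
      { carrier := M
        add_mem' := fun hv hw => hMadd _ hv _ hw
        zero_mem' := mem_of_mem_nhds hMopen }
    exact CcZ.exists_forall_map_mem_smul_of_le_mul_iSup M' hMopen μ hC
  · rintro ⟨a, ha⟩
    obtain ⟨R, hR⟩ := isBounded_iff_forall_norm_le.mp (hMbdd.smul₀ (a : L))
    exact ⟨R, CcZ.norm_map_le_mul_iSup_of_forall_norm_le μ fun f => hR _ (ha f)⟩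

/-- Let `V` be a Banach space over a `p`-adic field `L` and `M ⊆ V` an
open and bounded lattice (an `𝒪_L`-submodule, i.e. stable under addition and under
scalars of norm `≤ 1`, with `⋃ₐ aM = V` and `⋂ₐ aM = 0`).  Then, for a totally
disconnected locally compact group `𝒢`, a `V`-valued distribution on `𝒢` (a
homomorphism `μ : C_c(𝒢, ℤ)₀ → V`) is a measure (continuous for the supremum norm,
equivalently bounded) if and only if it lies in the image of the canonical inclusion
`Dist(𝒢, M) ⊗_{𝒪_L} L → Dist(𝒢, V)`, i.e. all its values lie in `a • M` for a single
`a ∈ L^×`. -/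
theorem stmt3
    (p : ℕ) [Fact p.Prime]
    (L : Type*) [NontriviallyNormedField L] [Algebra ℚ_[p] L]
    (𝒢 : Type*) [Group 𝒢] [TopologicalSpace 𝒢] [IsTopologicalGroup 𝒢]
    [LocallyCompactSpace 𝒢] [TotallyDisconnectedSpace 𝒢]
    (V : Type*) [NormedAddCommGroup V] [NormedSpace L V] [CompleteSpace V]
    (M : Set V)
    (hM0 : (0 : V) ∈ M)
    (hMadd : ∀ v ∈ M, ∀ w ∈ M, v + w ∈ M)
    (hMsmul : ∀ c : L, ‖c‖ ≤ 1 → ∀ v ∈ M, c • v ∈ M)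
    (hMcover : ∀ v : V, ∃ a : Lˣ, v ∈ (a : L) • M)
    (hMsep : ∀ v : V, (∀ a : Lˣ, v ∈ (a : L) • M) → v = 0)
    (hMopen : M ∈ nhds (0 : V))
    (hMbdd : Bornology.IsBounded M)
    (μ : CcZ 𝒢 →+ V) :
    (∃ C : ℝ, ∀ f : CcZ 𝒢, ‖μ f‖ ≤ C * ⨆ x : 𝒢, ‖((f : C(𝒢, ℤ)) x : ℤ)‖)
      ↔ ∃ a : Lˣ, ∀ f : CcZ 𝒢, μ f ∈ (a : L) • M :=
  stmt3_general L 𝒢 V M hMadd hMopen hMbdd μ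
end

section
/- Let I_T(χ, s) denote the analytically continued local torus integral as in the split, inert, or ramified case of the explicit formula: I_T(χ,s) = q^{(2−2s)n_T} L(1,η) (ζ_P(2s−1)/ζ_P(2−2s)) · L(−s+1/2, π, χ)/L(s−1/2, π, χ) for unramified χ (or with factor q^{(1−2s)n_χ} for ramified χ). Then I_T(χ, 0) = 0 if and only if χ(t) = α^{ν(det t)} for all t, where α = ±1. -/
/-!
At `s = 0` the torus integral is a product of a power of `q`, the value `L(1, η)`, the ratio
`ζ(-1)/ζ(2)` and the quotient `L(1/2, π, χ)/L(-1/2, π, χ)`. Since `|α χ(ϖ)^{±1} q⁻¹| = q⁻¹ < 1`,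
no Euler factor `1 - x` with `|x| < 1` vanishes, so the only possible zero comes from the
inverse factor `(1 - α χ(ϖ))(1 - α χ(ϖ)⁻¹)` of `L(-1/2, π, χ)`; as `α⁻¹ = α`, both of its
factors vanish exactly when `χ(ϖ) = α`.
-/

theorem one_sub_ne_zero_of_norm_lt_one {R : Type*} [NormedRing R] [NormOneClass R] {z : R}
    (hz : ‖z‖ < 1) : 1 - z ≠ 0 := by
  rw [sub_ne_zero]
  rintro rfl
  simp at hz

theorem one_add_ne_zero_of_norm_lt_one {R : Type*} [NormedRing R] [NormOneClass R] {z : R}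
    (hz : ‖z‖ < 1) : 1 + z ≠ 0 := by
  simpa using one_sub_ne_zero_of_norm_lt_one (z := -z) (by rwa [norm_neg])

theorem one_sub_mul_ne_zero_of_norm_eq_one {R : Type*} [NormedRing R] [NormOneClass R]
    [NormMulClass R] {u z : R} (hu : ‖u‖ = 1) (hz : ‖z‖ < 1) : 1 - u * z ≠ 0 :=
  one_sub_ne_zero_of_norm_lt_one (by rwa [norm_mul, hu, one_mul])

theorem one_sub_mul_mul_one_sub_mul_inv_eq_zero_iff {K : Type*} [Field K] {a t : K}
    (ha : a * a = 1) (ht : t ≠ 0) : (1 - a * t) * (1 - a * t⁻¹) = 0 ↔ t = a := by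
  have ha_inv : a⁻¹ = a := inv_eq_of_mul_eq_one_right ha
  rw [mul_eq_zero, sub_eq_zero, sub_eq_zero, eq_comm (a := (1 : K)), eq_comm (a := (1 : K)),
    mul_eq_one_iff_eq_inv₀ ht, mul_eq_one_iff_eq_inv₀ (inv_ne_zero ht), inv_inv, ha_inv.symm,
    inv_inj, ha_inv, eq_comm (a := a), or_self]

theorem norm_inv_lt_one_of_one_lt {q : ℝ} (hq : 1 < q) : ‖(q : ℂ)⁻¹‖ < 1 := by
  rw [norm_inv, Complex.norm_of_nonneg (by linarith)]
  exact inv_lt_one_of_one_lt₀ hq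

theorem ne_zero_of_eq_inv_one_sub_or_inv_one_add_or_one {q : ℝ} (hq : 1 < q) {Lη : ℂ}
    (hLη : Lη = (1 - (q : ℂ)⁻¹)⁻¹ ∨ Lη = (1 + (q : ℂ)⁻¹)⁻¹ ∨ Lη = 1) : Lη ≠ 0 := by
  have hqi := norm_inv_lt_one_of_one_lt hq
  rcases hLη with rfl | rfl | rfl
  · exact inv_ne_zero (one_sub_ne_zero_of_norm_lt_one hqi)
  · exact inv_ne_zero (one_add_ne_zero_of_norm_lt_one hqi)
  · exact one_ne_zero

theorem one_sub_inv_sq_div_one_sub_ne_zero {q : ℝ} (hq : 1 < q) :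
    (1 - ((q : ℂ)⁻¹) ^ 2) / (1 - (q : ℂ)) ≠ 0 := by
  have hqi := norm_inv_lt_one_of_one_lt hq
  refine div_ne_zero (one_sub_ne_zero_of_norm_lt_one ?_) ?_
  · rw [norm_pow]
    exact pow_lt_one₀ (norm_nonneg _) hqi two_ne_zero
  · rw [sub_ne_zero]
    exact_mod_cast hq.ne

theorem stmt10_general
    (q : ℝ) (hq : 1 < q) (nT : ℤ) (nχ : ℕ)
    (a t : ℂ) (ha : a = 1 ∨ a = -1) (ht : ‖t‖ = 1)
    (Lη : ℂ)
    (hLη : Lη = (1 - (q : ℂ)⁻¹)⁻¹ ∨ Lη = (1 + (q : ℂ)⁻¹)⁻¹ ∨ Lη = 1) :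
    (((q : ℂ) ^ (2 * nT) * Lη * ((1 - ((q : ℂ)⁻¹) ^ 2) / (1 - (q : ℂ))) *
        ((1 - a * t) * (1 - a * t⁻¹) /
          ((1 - a * t * (q : ℂ)⁻¹) * (1 - a * t⁻¹ * (q : ℂ)⁻¹))) = 0)
      ↔ t = a)
    ∧ (q : ℂ) ^ (2 * nT) * Lη * ((1 - ((q : ℂ)⁻¹) ^ 2) / (1 - (q : ℂ))) *
        (q : ℂ) ^ (nχ : ℕ) ≠ 0 := by
  have hq0 : (q : ℂ) ≠ 0 := by exact_mod_cast (zero_lt_one.trans hq).ne'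
  have hqi := norm_inv_lt_one_of_one_lt hq
  have hnorm_a : ‖a‖ = 1 := by rcases ha with rfl | rfl <;> simp
  have ha_sq : a * a = 1 := by rcases ha with rfl | rfl <;> norm_num
  have ht0 : t ≠ 0 := norm_ne_zero_iff.mp (by simp [ht])
  have hprefactor : (q : ℂ) ^ (2 * nT) * Lη * ((1 - ((q : ℂ)⁻¹) ^ 2) / (1 - (q : ℂ))) ≠ 0 :=
    mul_ne_zero (mul_ne_zero (zpow_ne_zero _ hq0) (ne_zero_of_eq_inv_one_sub_or_inv_one_add_or_one hq hLη))
      (one_sub_inv_sq_div_one_sub_ne_zero hq)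
  have hdenom : (1 - a * t * (q : ℂ)⁻¹) * (1 - a * t⁻¹ * (q : ℂ)⁻¹) ≠ 0 :=
    mul_ne_zero
      (one_sub_mul_ne_zero_of_norm_eq_one (by rw [norm_mul, hnorm_a, ht, one_mul]) hqi)
      (one_sub_mul_ne_zero_of_norm_eq_one (by rw [norm_mul, norm_inv, hnorm_a, ht]; norm_num) hqi)
  refine ⟨?_, mul_ne_zero hprefactor (pow_ne_zero _ hq0)⟩
  rw [mul_eq_zero, or_iff_right hprefactor, div_eq_zero_iff, or_iff_left hdenom]
  exact one_sub_mul_mul_one_sub_mul_inv_eq_zero_iff ha_sq ht0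

/-- Exceptional zero criterion: the analytically continued local torus
integral, at `s = 0`, equals
`I_T(χ,0) = q^{2n_T}·L(1,η)·(ζ(−1)/ζ(2))·L(1/2,π,χ)/L(−1/2,π,χ)` for unramified `χ`
(given by `t = χ(ϖ)`, with split L-factors, `ζ(−1)/ζ(2) = (1−q⁻²)/(1−q)` and
`α = ±1`); it vanishes if and only if `χ(ϖ) = α`, i.e. `χ(t) = α^{ν(det t)}`.
For ramified `χ` the factor is `q^{n_χ}` instead and the value never vanishes. -/
theorem stmt10
    (q : ℝ) (hq : 1 < q) (nT : ℤ) (nχ : ℕ)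
    (a t : ℂ) (ha : a = 1 ∨ a = -1) (ht : ‖t‖ = 1) (ht0 : t ≠ 0)
    (Lη : ℂ)
    (hLη : Lη = (1 - (q : ℂ)⁻¹)⁻¹ ∨ Lη = (1 + (q : ℂ)⁻¹)⁻¹ ∨ Lη = 1) :
    (((q : ℂ) ^ (2 * nT) * Lη * ((1 - ((q : ℂ)⁻¹) ^ 2) / (1 - (q : ℂ))) *
        ((1 - a * t) * (1 - a * t⁻¹) /
          ((1 - a * t * (q : ℂ)⁻¹) * (1 - a * t⁻¹ * (q : ℂ)⁻¹))) = 0)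
      ↔ t = a)
    ∧ (q : ℂ) ^ (2 * nT) * Lη * ((1 - ((q : ℂ)⁻¹) ^ 2) / (1 - (q : ℂ))) *
        (q : ℂ) ^ (nχ : ℕ) ≠ 0 :=
  stmt10_general q hq nT nχ a t ha ht Lη hLη
end
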